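/- arXiv:2301.09217 — 4 statements merged into one kernel-verified Lean document; each statement's English description precedes it below -/
import Mathlib

section
/- Approximate complementary slackness (Lemma 2.3 of Duan–Pettie, bipartite case): Let G = (U ∪ V, E) be a finite weighted bipartite graph with nonnegative edge weights w, let M ⊆ E be a matching, let ε₀, ε₁ ≥ 0, and let y assign a nonnegative real to every vertex. Suppose (i) for all uv ∈ E, y_u + y_v ≥ (1−ε₀)·w(uv); (ii) for all uv ∈ M, y_u + y_v ≤ (1+ε₁)·w(uv); and (iii) y_z = 0 for every vertex z unmatched by M. Then for every matching M' ⊆ E, w(M) ≥ (1+ε₁)^{-1}·(1−ε₀)·w(M'); in particular M is a (1+ε₁)^{-1}(1−ε₀)-approximate maximum weight matching. -/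
/-! Both matchings are compared with the dual objective `∑ y`. The edges of a matching `M'` meet
each vertex at most once, so `(1-ε₀)·w(M') ≤ ∑_{uv ∈ M'} (y_u + y_v) ≤ ∑ y` by feasibility
and `y ≥ 0`; as `y` vanishes off the vertices covered by `M`,
`∑ y = ∑_{uv ∈ M} (y_u + y_v) ≤ (1+ε₁)·w(M)`. -/

/-- `M` is a matching: no two distinct edges share an endpoint. -/
def IsMatching {U V : Type*} (M : Finset (U × V)) : Prop :=
  ∀ e ∈ M, ∀ e' ∈ M, e ≠ e' → e.1 ≠ e'.1 ∧ e.2 ≠ e'.2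

namespace IsMatching

variable {U V : Type*} {M : Finset (U × V)}

theorem injOn_fst (hM : IsMatching M) : Set.InjOn Prod.fst (M : Set (U × V)) :=
  fun e he e' he' h => by_contra fun hne => (hM e he e' he' hne).1 h

theorem injOn_snd (hM : IsMatching M) : Set.InjOn Prod.snd (M : Set (U × V)) :=
  fun e he e' he' h => by_contra fun hne => (hM e he e' he' hne).2 h

section Sums

variable {R : Type*} [AddCommMonoid R]

theorem sum_fst_le [PartialOrder R] [IsOrderedAddMonoid R] [Fintype U] (hM : IsMatching M)
    {f : U → R} (hf : ∀ u, 0 ≤ f u) : ∑ e ∈ M, f e.1 ≤ ∑ u, f u := by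
  classical
  rw [← Finset.sum_image hM.injOn_fst]
  exact Finset.sum_le_univ_sum_of_nonneg hf

theorem sum_snd_le [PartialOrder R] [IsOrderedAddMonoid R] [Fintype V] (hM : IsMatching M)
    {f : V → R} (hf : ∀ v, 0 ≤ f v) : ∑ e ∈ M, f e.2 ≤ ∑ v, f v := by
  classical
  rw [← Finset.sum_image hM.injOn_snd]
  exact Finset.sum_le_univ_sum_of_nonneg hf

theorem sum_fst_eq [Fintype U] (hM : IsMatching M) {f : U → R}
    (hf : ∀ u, (∀ e ∈ M, e.1 ≠ u) → f u = 0) : ∑ e ∈ M, f e.1 = ∑ u, f u := by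
  classical
  rw [← Finset.sum_image hM.injOn_fst]
  refine Finset.sum_subset (Finset.subset_univ _) fun u _ hu => hf u fun e he h => ?_
  exact hu (Finset.mem_image.mpr ⟨e, he, h⟩)

theorem sum_snd_eq [Fintype V] (hM : IsMatching M) {f : V → R}
    (hf : ∀ v, (∀ e ∈ M, e.2 ≠ v) → f v = 0) : ∑ e ∈ M, f e.2 = ∑ v, f v := by
  classical
  rw [← Finset.sum_image hM.injOn_snd]
  refine Finset.sum_subset (Finset.subset_univ _) fun v _ hv => hf v fun e he h => ?_
  exact hv (Finset.mem_image.mpr ⟨e, he, h⟩)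

variable [Fintype U] [Fintype V] {yu : U → R} {yv : V → R}

theorem sum_add_le [PartialOrder R] [IsOrderedAddMonoid R] (hM : IsMatching M)
    (hyu : ∀ u, 0 ≤ yu u) (hyv : ∀ v, 0 ≤ yv v) :
    ∑ e ∈ M, (yu e.1 + yv e.2) ≤ ∑ u, yu u + ∑ v, yv v := by
  rw [Finset.sum_add_distrib]
  exact add_le_add (hM.sum_fst_le hyu) (hM.sum_snd_le hyv)

theorem sum_add_eq (hM : IsMatching M)
    (hyu : ∀ u, (∀ e ∈ M, e.1 ≠ u) → yu u = 0) (hyv : ∀ v, (∀ e ∈ M, e.2 ≠ v) → yv v = 0) :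
    ∑ e ∈ M, (yu e.1 + yv e.2) = ∑ u, yu u + ∑ v, yv v := by
  rw [Finset.sum_add_distrib, hM.sum_fst_eq hyu, hM.sum_snd_eq hyv]

end Sums

end IsMatching

theorem approximate_complementary_slackness_general
    {U V : Type*} [Fintype U] [Fintype V]
    (E : Finset (U × V)) (w : U × V → ℝ)
    (M : Finset (U × V)) (hM : IsMatching M)
    (ε₀ ε₁ : ℝ) (hε₁ : 0 ≤ ε₁)
    (yu : U → ℝ) (yv : V → ℝ)
    (hyu : ∀ u : U, 0 ≤ yu u) (hyv : ∀ v : V, 0 ≤ yv v)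
    (hfeas : ∀ e ∈ E, (1 - ε₀) * w e ≤ yu e.1 + yv e.2)
    (htight : ∀ e ∈ M, yu e.1 + yv e.2 ≤ (1 + ε₁) * w e)
    (hyu0 : ∀ u : U, (∀ e ∈ M, e.1 ≠ u) → yu u = 0)
    (hyv0 : ∀ v : V, (∀ e ∈ M, e.2 ≠ v) → yv v = 0) :
    ∀ M' : Finset (U × V), M' ⊆ E → IsMatching M' →
      (1 + ε₁)⁻¹ * (1 - ε₀) * ∑ e ∈ M', w e ≤ ∑ e ∈ M, w e := by
  intro M' hM'E hM'
  rw [mul_assoc, inv_mul_le_iff₀ (by linarith)]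
  calc (1 - ε₀) * ∑ e ∈ M', w e = ∑ e ∈ M', (1 - ε₀) * w e := Finset.mul_sum ..
    _ ≤ ∑ e ∈ M', (yu e.1 + yv e.2) := Finset.sum_le_sum fun e he => hfeas e (hM'E he)
    _ ≤ ∑ u, yu u + ∑ v, yv v := hM'.sum_add_le hyu hyv
    _ = ∑ e ∈ M, (yu e.1 + yv e.2) := (hM.sum_add_eq hyu0 hyv0).symm
    _ ≤ ∑ e ∈ M, (1 + ε₁) * w e := Finset.sum_le_sum htight
    _ = (1 + ε₁) * ∑ e ∈ M, w e := (Finset.mul_sum ..).symm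

/-- **Approximate complementary slackness** (Lemma 2.3 of Duan–Pettie, bipartite case).
If the nonnegative duals `y` satisfy `y_u + y_v ≥ (1-ε₀)·w(uv)` for all edges,
`y_u + y_v ≤ (1+ε₁)·w(uv)` for all matched edges, and `y` vanishes on vertices
unmatched by `M`, then `M` is a `(1+ε₁)⁻¹(1-ε₀)`-approximate maximum weight matching. -/
theorem approximate_complementary_slackness
    {U V : Type*} [Fintype U] [Fintype V] [DecidableEq U] [DecidableEq V]
    (E : Finset (U × V)) (w : U × V → ℝ)
    (hw : ∀ e ∈ E, 0 ≤ w e)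
    (M : Finset (U × V)) (hME : M ⊆ E) (hM : IsMatching M)
    (ε₀ ε₁ : ℝ) (hε₀ : 0 ≤ ε₀) (hε₁ : 0 ≤ ε₁)
    (yu : U → ℝ) (yv : V → ℝ)
    (hyu : ∀ u : U, 0 ≤ yu u) (hyv : ∀ v : V, 0 ≤ yv v)
    (hfeas : ∀ e ∈ E, (1 - ε₀) * w e ≤ yu e.1 + yv e.2)
    (htight : ∀ e ∈ M, yu e.1 + yv e.2 ≤ (1 + ε₁) * w e)
    (hyu0 : ∀ u : U, (∀ e ∈ M, e.1 ≠ u) → yu u = 0)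
    (hyv0 : ∀ v : V, (∀ e ∈ M, e.2 ≠ v) → yv v = 0) :
    ∀ M' : Finset (U × V), M' ⊆ E → IsMatching M' →
      (1 + ε₁)⁻¹ * (1 - ε₀) * ∑ e ∈ M', w e ≤ ∑ e ∈ M, w e :=
  approximate_complementary_slackness_general E w M hM ε₀ ε₁ hε₁ yu yv hyu hyv hfeas htight hyu0
    hyv0
end

section
/- Existence of an ε-stable matching–price pair (correctness content of the multiplicative auction algorithm): Let G = (U ∪ V, E) be a finite weighted bipartite graph with positive edge weights w and let 0 < ε ≤ 1/2. Then there exist a matching M ⊆ E and nonnegative prices y_u for u ∈ U such that (i) y_u = 0 for every u ∈ U unmatched by M; (ii) for every matched edge uv ∈ M, w(uv) − y_u > 0 and w(uv) − y_u ≥ (1−2ε)·(w(u'v) − y_{u'}) for every neighbor u' ∈ N(v); and (iii) for every v ∈ V unmatched by M and every neighbor u ∈ N(v), w(uv) − y_u ≤ ε·w(uv). Consequently, for every weighted bipartite graph and every 0 < ε' < 1 there exists a matching M with w(M) ≥ (1−ε')·w(M*), where M* is a maximum weight matching. -/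
theorem Finset.exists_pos_forall_le {ι : Type*} (s : Finset ι) (f : ι → ℝ)
    (hf : ∀ i ∈ s, 0 < f i) : ∃ δ > 0, ∀ i ∈ s, δ ≤ f i := by
  rcases s.eq_empty_or_nonempty with rfl | hs
  · exact ⟨1, one_pos, by simp⟩
  · exact ⟨s.inf' hs f, (Finset.lt_inf'_iff hs).2 hf, fun i hi => Finset.inf'_le f hi⟩

namespace IsMatching

variable {U V : Type*} {M N : Finset (U × V)}

theorem empty : IsMatching (∅ : Finset (U × V)) := by
  simp [IsMatching]

theorem mono (hM : IsMatching M) (hNM : N ⊆ M) : IsMatching N :=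
  fun e he e' he' hne => hM e (hNM he) e' (hNM he') hne

theorem insert [DecidableEq U] [DecidableEq V] (hM : IsMatching M) {u : U} {v : V}
    (hu : ∀ e ∈ M, e.1 ≠ u) (hv : ∀ e ∈ M, e.2 ≠ v) : IsMatching (insert (u, v) M) := by
  intro e he e' he' hne
  rcases Finset.mem_insert.1 he with rfl | he <;> rcases Finset.mem_insert.1 he' with rfl | he'
  · exact absurd rfl hne
  · exact ⟨(hu _ he').symm, (hv _ he').symm⟩
  · exact ⟨hu _ he, hv _ he⟩
  · exact hM e he e' he' hne

end IsMatching

namespace Auction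

variable {U V : Type*} (E : Finset (U × V)) (w : U × V → ℝ) (ε : ℝ)

/-- The invariant of the auction: conditions (i) and (ii) of an `ε`-stable pair. -/
structure IsState (M : Finset (U × V)) (y : U → ℝ) : Prop where
  subset : M ⊆ E
  isMatching : IsMatching M
  nonneg : ∀ u, 0 ≤ y u
  eq_zero_of_unmatched : ∀ u, (∀ e ∈ M, e.1 ≠ u) → y u = 0
  stable : ∀ e ∈ M, 0 < w e - y e.1 ∧
    ∀ u', (u', e.2) ∈ E → (1 - 2 * ε) * (w (u', e.2) - y u') ≤ w e - y e.1

/-- Condition (iii) of an `ε`-stable pair, the stopping condition of the auction. -/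
def UnmatchedSatisfied (M : Finset (U × V)) (y : U → ℝ) : Prop :=
  ∀ v, (∀ e ∈ M, e.2 ≠ v) → ∀ u, (u, v) ∈ E → w (u, v) - y u ≤ ε * w (u, v)

variable {E w ε}

theorem isState_empty : IsState E w ε ∅ 0 where
  subset := Finset.empty_subset E
  isMatching := IsMatching.empty
  nonneg _ := le_rfl
  eq_zero_of_unmatched _ _ := rfl
  stable := by simp

namespace IsState

variable {M : Finset (U × V)} {y : U → ℝ}

theorem le_sum_weight (hs : IsState E w ε M y) (hw : ∀ e ∈ E, 0 ≤ w e) (u : U) :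
    y u ≤ ∑ e ∈ E, w e := by
  by_cases hu : ∃ e ∈ M, e.1 = u
  · obtain ⟨e, he, rfl⟩ := hu
    calc y e.1 ≤ w e := (sub_pos.1 (hs.stable e he).1).le
      _ ≤ ∑ e ∈ E, w e := Finset.single_le_sum hw (hs.subset he)
  · rw [hs.eq_zero_of_unmatched u fun e he h => hu ⟨e, he, h⟩]
    exact Finset.sum_nonneg hw

theorem bid [DecidableEq U] [DecidableEq V] (hs : IsState E w ε M y) (hε0 : 0 < ε)
    (hε : ε ≤ 1 / 2) {u : U} {v : V} (hv : ∀ e ∈ M, e.2 ≠ v) (huv : (u, v) ∈ E)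
    (hpos : 0 < w (u, v) - y u)
    (hmax : ∀ u', (u', v) ∈ E → w (u', v) - y u' ≤ w (u, v) - y u) :
    IsState E w ε (insert (u, v) (M.filter (·.1 ≠ u)))
      (y + Pi.single u (ε * (w (u, v) - y u))) := by
  set m := w (u, v) - y u
  have hy_le : y ≤ y + Pi.single u (ε * m) :=
    le_add_of_nonneg_right (Pi.single_nonneg.2 (mul_nonneg hε0.le hpos.le))
  have hy_ne : ∀ u', u' ≠ u → (y + Pi.single u (ε * m) : U → ℝ) u' = y u' :=
    fun u' h => by rw [Pi.add_apply, Pi.single_eq_of_ne h, add_zero]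
  refine ⟨Finset.insert_subset huv ((Finset.filter_subset _ _).trans hs.subset),
    (hs.isMatching.mono (Finset.filter_subset _ _)).insert (by simp)
      (fun e he => hv e (Finset.mem_filter.1 he).1),
    fun u' => (hs.nonneg u').trans (hy_le u'), fun u' hu' => ?unmatched, fun e he => ?stable⟩
  case unmatched =>
    have hne : u' ≠ u := (hu' (u, v) (Finset.mem_insert_self _ _)).symm
    rw [hy_ne u' hne]
    refine hs.eq_zero_of_unmatched u' fun e he he' => ?_
    exact hu' e (Finset.mem_insert_of_mem (Finset.mem_filter.2 ⟨he, he' ▸ hne⟩)) he'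
  case stable =>
    rcases Finset.mem_insert.1 he with rfl | he
    · have hnew : w (u, v) - (y + Pi.single u (ε * m) : U → ℝ) u = (1 - ε) * m := by
        simp only [Pi.add_apply, Pi.single_eq_same, m]; ring
      refine ⟨by rw [hnew]; nlinarith, fun u' hu' => ?_⟩
      have h := (hmax u' hu').trans' (sub_le_sub_left (hy_le u') _)
      calc (1 - 2 * ε) * _ ≤ (1 - 2 * ε) * m := mul_le_mul_of_nonneg_left h (by linarith)
        _ ≤ w (u, v) - _ := by rw [hnew]; nlinarith
    · obtain ⟨he, hne⟩ := Finset.mem_filter.1 he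
      obtain ⟨hpos', hst⟩ := hs.stable e he
      rw [hy_ne _ hne]
      refine ⟨hpos', fun u' hu' => (hst u' hu').trans' ?_⟩
      exact mul_le_mul_of_nonneg_left (sub_le_sub_left (hy_le u') _) (by linarith)

theorem exists_bid [DecidableEq U] (hs : IsState E w ε M y) (hε0 : 0 < ε) (hε : ε ≤ 1 / 2)
    {δ : ℝ} (hδ : ∀ e ∈ E, δ ≤ ε * (ε * w e)) (hw : ∀ e ∈ E, 0 < w e)
    (hunsat : ¬UnmatchedSatisfied E w ε M y) :
    ∃ M' y', IsState E w ε M' y' ∧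
      ∑ u ∈ E.image Prod.fst, y u + δ ≤ ∑ u ∈ E.image Prod.fst, y' u := by
  classical
  simp only [UnmatchedSatisfied, not_forall, not_le] at hunsat
  obtain ⟨v, hv, u₀, hu₀, hviol⟩ := hunsat
  have hvE : ((u₀, v) : U × V) ∈ E.filter (·.2 = v) := Finset.mem_filter.2 ⟨hu₀, rfl⟩
  obtain ⟨⟨u, v'⟩, huv, hmax⟩ :=
    (E.filter (·.2 = v)).exists_max_image (fun e => w e - y e.1) ⟨_, hvE⟩
  obtain ⟨huvE, rfl : v' = v⟩ := Finset.mem_filter.1 huv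
  have hmax' : ∀ u', (u', v') ∈ E → w (u', v') - y u' ≤ w (u, v') - y u :=
    fun u' hu' => hmax (u', v') (Finset.mem_filter.2 ⟨hu', rfl⟩)
  have hmargin : ε * w (u₀, v') < w (u, v') - y u := hviol.trans_le (hmax (u₀, v') hvE)
  have hw₀ := hw _ hu₀
  refine ⟨_, _, hs.bid hε0 hε hv huvE (by nlinarith) hmax', ?_⟩
  rw [Pi.add_def, Finset.sum_add_distrib, Finset.sum_pi_single',
    if_pos (Finset.mem_image_of_mem Prod.fst huvE)]
  have := hδ _ hu₀
  gcongr
  nlinarith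

end IsState

theorem exists_isState_unmatchedSatisfied (hw : ∀ e ∈ E, 0 < w e) (hε0 : 0 < ε)
    (hε : ε ≤ 1 / 2) :
    ∃ M y, IsState E w ε M y ∧ UnmatchedSatisfied E w ε M y := by
  classical
  by_contra! hnone
  obtain ⟨δ, hδ0, hδ⟩ := E.exists_pos_forall_le (fun e => ε * (ε * w e))
    fun e he => by have := hw e he; positivity
  set S := E.image Prod.fst
  have hgrow : ∀ n : ℕ, ∃ M y, IsState E w ε M y ∧ n * δ ≤ ∑ u ∈ S, y u := by
    intro n
    induction n with
    | zero => exact ⟨∅, 0, isState_empty, by simp⟩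
    | succ n ih =>
      obtain ⟨M, y, hs, hn⟩ := ih
      obtain ⟨M', y', hs', hinc⟩ := hs.exists_bid hε0 hε hδ hw (hnone M y hs)
      exact ⟨M', y', hs', by push_cast; linarith⟩
  obtain ⟨n, hn⟩ := exists_nat_gt ((S.card • ∑ e ∈ E, w e) / δ)
  obtain ⟨M, y, hs, hle⟩ := hgrow n
  have hbound : ∑ u ∈ S, y u ≤ S.card • ∑ e ∈ E, w e :=
    Finset.sum_le_card_nsmul _ _ _ fun u _ => hs.le_sum_weight (fun e he => (hw e he).le) u
  rw [div_lt_iff₀ hδ0] at hn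
  linarith

end Auction

theorem exists_isMatching_forall_sum_le {U V : Type*} (E : Finset (U × V)) (w : U × V → ℝ) :
    ∃ M ⊆ E, IsMatching M ∧
      ∀ M' ⊆ E, IsMatching M' → ∑ e ∈ M', w e ≤ ∑ e ∈ M, w e := by
  classical
  obtain ⟨M, hM, hmax⟩ := (E.powerset.filter IsMatching).exists_max_image (∑ e ∈ ·, w e)
    ⟨∅, Finset.mem_filter.2 ⟨Finset.empty_mem_powerset E, IsMatching.empty⟩⟩
  obtain ⟨hME, hMm⟩ := Finset.mem_filter.1 hM
  exact ⟨M, Finset.mem_powerset.1 hME, hMm, fun M' hM'E hM'm =>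
    hmax M' (Finset.mem_filter.2 ⟨Finset.mem_powerset.2 hM'E, hM'm⟩)⟩

theorem exists_eps_stable_pair_general
    {U V : Type*}
    (E : Finset (U × V)) (w : U × V → ℝ)
    (hw : ∀ e ∈ E, 0 < w e)
    (ε : ℝ) (hε0 : 0 < ε) (hε : ε ≤ 1 / 2) :
    (∃ (M : Finset (U × V)) (y : U → ℝ),
      M ⊆ E ∧ IsMatching M ∧ (∀ u : U, 0 ≤ y u) ∧
      (∀ u : U, (∀ e ∈ M, e.1 ≠ u) → y u = 0) ∧
      (∀ e ∈ M, 0 < w e - y e.1 ∧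
        ∀ u' : U, (u', e.2) ∈ E → (1 - 2 * ε) * (w (u', e.2) - y u') ≤ w e - y e.1) ∧
      (∀ v : V, (∀ e ∈ M, e.2 ≠ v) →
        ∀ u : U, (u, v) ∈ E → w (u, v) - y u ≤ ε * w (u, v))) ∧
    (∀ ε' : ℝ, 0 < ε' → ε' < 1 →
      ∃ M : Finset (U × V), M ⊆ E ∧ IsMatching M ∧
        ∀ M' : Finset (U × V), M' ⊆ E → IsMatching M' →
          (1 - ε') * ∑ e ∈ M', w e ≤ ∑ e ∈ M, w e) := by
  obtain ⟨M, y, hs, hsat⟩ := Auction.exists_isState_unmatchedSatisfied hw hε0 hε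
  refine ⟨⟨M, y, hs.subset, hs.isMatching, hs.nonneg, hs.eq_zero_of_unmatched, hs.stable,
    hsat⟩, fun ε' hε'0 _ => ?_⟩
  obtain ⟨M, hME, hM, hmax⟩ := exists_isMatching_forall_sum_le E w
  refine ⟨M, hME, hM, fun M' hM'E hM' => ?_⟩
  calc (1 - ε') * ∑ e ∈ M', w e ≤ ∑ e ∈ M', w e :=
        mul_le_of_le_one_left (Finset.sum_nonneg fun e he => (hw e (hM'E he)).le) (by linarith)
    _ ≤ ∑ e ∈ M, w e := hmax M' hM'E hM'

/-- **Existence of an ε-stable matching–price pair** (correctness content of the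
multiplicative auction algorithm), together with the consequence that for every
`0 < ε' < 1` there is a `(1-ε')`-approximate maximum weight matching. -/
theorem exists_eps_stable_pair
    {U V : Type*} [Fintype U] [Fintype V] [DecidableEq U] [DecidableEq V]
    (E : Finset (U × V)) (w : U × V → ℝ)
    (hw : ∀ e ∈ E, 0 < w e)
    (ε : ℝ) (hε0 : 0 < ε) (hε : ε ≤ 1 / 2) :
    (∃ (M : Finset (U × V)) (y : U → ℝ),
      M ⊆ E ∧ IsMatching M ∧ (∀ u : U, 0 ≤ y u) ∧
      (∀ u : U, (∀ e ∈ M, e.1 ≠ u) → y u = 0) ∧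
      (∀ e ∈ M, 0 < w e - y e.1 ∧
        ∀ u' : U, (u', e.2) ∈ E → (1 - 2 * ε) * (w (u', e.2) - y u') ≤ w e - y e.1) ∧
      (∀ v : V, (∀ e ∈ M, e.2 ≠ v) →
        ∀ u : U, (u, v) ∈ E → w (u, v) - y u ≤ ε * w (u, v))) ∧
    (∀ ε' : ℝ, 0 < ε' → ε' < 1 →
      ∃ M : Finset (U × V), M ⊆ E ∧ IsMatching M ∧
        ∀ M' : Finset (U × V), M' ⊆ E → IsMatching M' →
          (1 - ε') * ∑ e ∈ M', w e ≤ ∑ e ∈ M, w e) :=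
  exists_eps_stable_pair_general E w hw ε hε0 hε
end

section
/- Alternating path inequality (Lemma A.1): Let 0 ≤ ε ≤ 1/2, let k ≥ 1, let a_1, …, a_k and b_1, …, b_k be real numbers (a_i = w(u_i v_i) are the weights of the M'-edges of an alternating path, b_i = w(u_{i+1} v_i) the weights of its M-edges), and let y_1, …, y_{k+1} be nonnegative reals (the prices y_{u_1}, …, y_{u_{k+1}}). If for every i with 1 ≤ i ≤ k we have (1−2ε)·(a_i − y_i) ≤ b_i − y_{i+1}, then (1−2ε)·Σ_{i=1}^k a_i ≤ Σ_{i=1}^k b_i + (1−2ε)·y_1 − y_{k+1}. -/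
/-! Summing the hypotheses over `i` telescopes the prices: each interior price `y i`,
`2 ≤ i ≤ k`, is left with the coefficient `c - 1 ≤ 0`, so it can be dropped. -/

open Finset

theorem mul_sum_Icc_le_of_mul_sub_le_sub_succ {R : Type*} [CommRing R] [LinearOrder R]
    [IsStrictOrderedRing R] {c : R} (hc : c ≤ 1) {k : ℕ} (hk : 1 ≤ k) {a b y : ℕ → R}
    (hy : ∀ i, 1 ≤ i → i ≤ k + 1 → 0 ≤ y i)
    (h : ∀ i, 1 ≤ i → i ≤ k → c * (a i - y i) ≤ b i - y (i + 1)) :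
    c * ∑ i ∈ Icc 1 k, a i ≤ (∑ i ∈ Icc 1 k, b i) + c * y 1 - y (k + 1) := by
  induction k, hk using Nat.le_induction with
  | base =>
    have hfirst := h 1 le_rfl le_rfl
    rw [Icc_self, sum_singleton, sum_singleton]
    linarith
  | succ n hn ih =>
    have hprefix := ih (fun i hi hin => hy i hi (by omega)) (fun i hi hin => h i hi (by omega))
    have hlast := h (n + 1) (by omega) le_rfl
    have habsorb : c * y (n + 1) ≤ y (n + 1) :=
      mul_le_of_le_one_left (hy (n + 1) (by omega) (by omega)) hc
    rw [sum_Icc_succ_top (by omega), sum_Icc_succ_top (by omega), mul_add]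
    linarith

theorem alternating_path_inequality_general
    (ε : ℝ) (hε0 : 0 ≤ ε)
    (k : ℕ) (hk : 1 ≤ k)
    (a b y : ℕ → ℝ)
    (hy : ∀ i, 1 ≤ i → i ≤ k + 1 → 0 ≤ y i)
    (h : ∀ i, 1 ≤ i → i ≤ k → (1 - 2 * ε) * (a i - y i) ≤ b i - y (i + 1)) :
    (1 - 2 * ε) * ∑ i ∈ Finset.Icc 1 k, a i ≤
      (∑ i ∈ Finset.Icc 1 k, b i) + (1 - 2 * ε) * y 1 - y (k + 1) :=
  mul_sum_Icc_le_of_mul_sub_le_sub_succ (by linarith) hk hy h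

/-- **Alternating path inequality** (Lemma A.1, arithmetic form).
Along an alternating path with `M'`-edge weights `a i`, `M`-edge weights `b i`, and
nonnegative prices `y 1, …, y (k+1)`, if `(1-2ε)·(a i - y i) ≤ b i - y (i+1)` for
`1 ≤ i ≤ k`, then `(1-2ε)·Σ a ≤ Σ b + (1-2ε)·y 1 - y (k+1)`. -/
theorem alternating_path_inequality
    (ε : ℝ) (hε0 : 0 ≤ ε) (hε : ε ≤ 1 / 2)
    (k : ℕ) (hk : 1 ≤ k)
    (a b y : ℕ → ℝ)
    (hy : ∀ i, 1 ≤ i → i ≤ k + 1 → 0 ≤ y i)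
    (h : ∀ i, 1 ≤ i → i ≤ k → (1 - 2 * ε) * (a i - y i) ≤ b i - y (i + 1)) :
    (1 - 2 * ε) * ∑ i ∈ Finset.Icc 1 k, a i ≤
      (∑ i ∈ Finset.Icc 1 k, b i) + (1 - 2 * ε) * y 1 - y (k + 1) :=
  alternating_path_inequality_general ε hε0 k hk a b y hy h
end

section
/- Odd alternating path inequality (case 2b of the combinatorial proof): Let 0 ≤ ε ≤ 1/2, let k ≥ 1, let a_1, …, a_{k+1} and b_1, …, b_k be real numbers, and let y_1, …, y_{k+1} be nonnegative reals with y_1 = 0 and y_{k+1} ≥ (1−ε)·a_{k+1}. If for every i with 1 ≤ i ≤ k we have (1−2ε)·(a_i − y_i) ≤ b_i − y_{i+1}, then (1−2ε)·Σ_{i=1}^{k+1} a_i ≤ Σ_{i=1}^k b_i. -/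
/-!
Summing the edge inequalities `c·(a i - y i) ≤ b i - y (i+1)` with `c = 1 - 2ε` telescopes the
prices: each intermediate price enters as `c·y i - y i ≤ 0`, and `y 1 = 0`, so
`c·∑_{i ≤ k} a i ≤ ∑ b i - y (k+1)`. The remaining term `c·a (k+1)` is paid for by
`y (k+1) ≥ (1-ε)·a (k+1)`.
-/

open Finset

theorem mul_sum_Icc_le_sum_Icc_sub {c : ℝ} (hc : c ≤ 1) {a b y : ℕ → ℝ} (hy1 : y 1 = 0) :
    ∀ k : ℕ, (∀ i, 1 ≤ i → i ≤ k → 0 ≤ y i) →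
      (∀ i, 1 ≤ i → i ≤ k → c * (a i - y i) ≤ b i - y (i + 1)) →
      c * ∑ i ∈ Icc 1 k, a i ≤ ∑ i ∈ Icc 1 k, b i - y (k + 1)
  | 0, _, _ => by simp [hy1]
  | k + 1, hy, h => by
    have ih := mul_sum_Icc_le_sum_Icc_sub hc hy1 k
      (fun i h1 h2 => hy i h1 (h2.trans k.le_succ)) (fun i h1 h2 => h i h1 (h2.trans k.le_succ))
    have hstep := h (k + 1) (Nat.le_add_left 1 k) le_rfl
    have hprice : c * y (k + 1) ≤ y (k + 1) :=
      mul_le_of_le_one_left (hy (k + 1) (Nat.le_add_left 1 k) le_rfl) hc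
    rw [sum_Icc_succ_top (Nat.le_add_left 1 k), sum_Icc_succ_top (Nat.le_add_left 1 k)]
    linarith

theorem mul_le_of_mul_le_of_le {a c d y : ℝ} (hc : 0 ≤ c) (hcd : c ≤ d) (hda : d * a ≤ y)
    (hy : 0 ≤ y) : c * a ≤ y := by
  rcases le_total 0 a with ha | ha
  · exact (mul_le_mul_of_nonneg_right hcd ha).trans hda
  · exact (mul_nonpos_of_nonneg_of_nonpos hc ha).trans hy

theorem odd_alternating_path_inequality_general
    (ε : ℝ) (hε0 : 0 ≤ ε) (hε : ε ≤ 1 / 2)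
    (k : ℕ)
    (a b y : ℕ → ℝ)
    (hy : ∀ i, 1 ≤ i → i ≤ k + 1 → 0 ≤ y i)
    (hy1 : y 1 = 0)
    (hyk : (1 - ε) * a (k + 1) ≤ y (k + 1))
    (h : ∀ i, 1 ≤ i → i ≤ k → (1 - 2 * ε) * (a i - y i) ≤ b i - y (i + 1)) :
    (1 - 2 * ε) * ∑ i ∈ Finset.Icc 1 (k + 1), a i ≤ ∑ i ∈ Finset.Icc 1 k, b i := by
  have hpath := mul_sum_Icc_le_sum_Icc_sub (by linarith) hy1 k
    (fun i h1 h2 => hy i h1 (h2.trans k.le_succ)) h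
  have hlast : (1 - 2 * ε) * a (k + 1) ≤ y (k + 1) :=
    mul_le_of_mul_le_of_le (by linarith) (by linarith) hyk
      (hy (k + 1) (Nat.le_add_left 1 k) le_rfl)
  rw [sum_Icc_succ_top (Nat.le_add_left 1 k), mul_add]
  linarith

/-- **Odd alternating path inequality** (case 2b of the combinatorial proof).
Along an odd alternating path with `M*`-edge weights `a 1, …, a (k+1)`, `M`-edge weights
`b 1, …, b k`, nonnegative prices `y` with `y 1 = 0` and `y (k+1) ≥ (1-ε)·a (k+1)`, if
`(1-2ε)·(a i - y i) ≤ b i - y (i+1)` for `1 ≤ i ≤ k`, then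
`(1-2ε)·Σ_{i=1}^{k+1} a i ≤ Σ_{i=1}^{k} b i`. -/
theorem odd_alternating_path_inequality
    (ε : ℝ) (hε0 : 0 ≤ ε) (hε : ε ≤ 1 / 2)
    (k : ℕ) (hk : 1 ≤ k)
    (a b y : ℕ → ℝ)
    (hy : ∀ i, 1 ≤ i → i ≤ k + 1 → 0 ≤ y i)
    (hy1 : y 1 = 0)
    (hyk : (1 - ε) * a (k + 1) ≤ y (k + 1))
    (h : ∀ i, 1 ≤ i → i ≤ k → (1 - 2 * ε) * (a i - y i) ≤ b i - y (i + 1)) :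
    (1 - 2 * ε) * ∑ i ∈ Finset.Icc 1 (k + 1), a i ≤ ∑ i ∈ Finset.Icc 1 k, b i :=
  odd_alternating_path_inequality_general ε hε0 hε k a b y hy hy1 hyk h
end
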